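/- Let G = (I* ∪ K, E) be a split graph with K a clique and I* a maximum independent set, and let H be any graph. Then γ_gr(G ∘ H) = |I*|·γ_gr(H) + n(G), where n(G) = 1 if there exist v, w ∈ K with N(v) ∩ N(w) ∩ I* = ∅ and n(G) = 0 otherwise. -/

import Mathlib

namespace GrundyDom

/-- Closed neighborhood N[v]. -/
def cn {V : Type*} (G : SimpleGraph V) (v : V) : Set V := insert v (G.neighborSet v)

/-- Union of closed neighborhoods of the vertices of a list. -/
def cnUnion {V : Type*} (G : SimpleGraph V) (L : List V) : Set V := ⋃ v ∈ L, cn G v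

/-- Private neighborhood of `v` with respect to the first `i` entries of `S`:
`N[v] \ (N[v_1] ∪ ... ∪ N[v_i])`. -/
def PN {V : Type*} (G : SimpleGraph V) (S : List V) (i : ℕ) (v : V) : Set V :=
  cn G v \ cnUnion G (S.take i)

/-- A legal dominating sequence: distinct vertices, dominating set, and every
vertex of the sequence has a nonempty private neighborhood w.r.t. its predecessors. -/
structure IsLegal {V : Type*} (G : SimpleGraph V) (S : List V) : Prop where
  nodup : S.Nodup
  dominates : ∀ v : V, ∃ u ∈ S, v ∈ cn G u
  legal : ∀ i : Fin S.length, (PN G S i.val (S.get i)).Nonempty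

/-- The set `I_S` of vertices that footprint themselves in `S`. -/
def selfFoot {V : Type*} (G : SimpleGraph V) (S : List V) : Set V :=
  {v | ∃ i : Fin S.length, S.get i = v ∧ v ∈ PN G S i.val v}

/-- Grundy domination number: maximum length of a legal dominating sequence. -/
noncomputable def gammaGr {V : Type*} (G : SimpleGraph V) : ℕ :=
  sSup {k | ∃ S : List V, IsLegal G S ∧ S.length = k}

/-- `γ_gr(G, I)`: maximum length of a legal dominating sequence `S` with `I_S = I`. -/
noncomputable def gammaGrOn {V : Type*} (G : SimpleGraph V) (I : Set V) : ℕ :=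
  sSup {k | ∃ S : List V, IsLegal G S ∧ selfFoot G S = I ∧ S.length = k}

/-- `γ_gr^u(G)`: maximum of `γ_gr(G, I)` over independent sets `I` containing `u`. -/
noncomputable def gammaGrVert {V : Type*} (G : SimpleGraph V) (u : V) : ℕ :=
  sSup {k | ∃ I : Set V, (∀ ⦃a⦄, a ∈ I → ∀ ⦃b⦄, b ∈ I → a ≠ b → ¬ G.Adj a b) ∧
    u ∈ I ∧ k = gammaGrOn G I}

/-- Independent set of a graph. -/
def IsIndep {V : Type*} (G : SimpleGraph V) (I : Set V) : Prop :=
  ∀ ⦃u⦄, u ∈ I → ∀ ⦃v⦄, v ∈ I → u ≠ v → ¬ G.Adj u v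

/-- The X-join product `G ↩ 𝓡`: replace each vertex `v` of `G` by the graph `R v`. -/
def XJoin {V : Type*} (G : SimpleGraph V) {W : V → Type*} (R : ∀ v, SimpleGraph (W v)) :
    SimpleGraph (Σ v, W v) where
  Adj x y := G.Adj x.1 y.1 ∨ ∃ h : x.1 = y.1, (R y.1).Adj (h ▸ x.2) y.2
  symm := ⟨by
    rintro ⟨a, xa⟩ ⟨b, yb⟩ (h | ⟨h, hadj⟩)
    · exact Or.inl h.symm
    · dsimp at h hadj
      subst h
      exact Or.inr ⟨rfl, hadj.symm⟩⟩
  loopless := ⟨by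
    rintro ⟨a, xa⟩ (h | ⟨h, hadj⟩)
    · exact h.ne rfl
    · exact hadj.ne rfl⟩

/-- The lexicographic product `G ∘ H`. -/
def Lex {V W : Type*} (G : SimpleGraph V) (H : SimpleGraph W) : SimpleGraph (V × W) where
  Adj x y := G.Adj x.1 y.1 ∨ (x.1 = y.1 ∧ H.Adj x.2 y.2)
  symm := ⟨by
    rintro x y (h | ⟨h1, h2⟩)
    · exact Or.inl h.symm
    · exact Or.inr ⟨h1.symm, h2.symm⟩⟩
  loopless := ⟨by
    rintro x (h | ⟨_, h⟩)
    · exact h.ne rfl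
    · exact h.ne rfl⟩

/-- The replacement graph `G_{u ↩ H}`: replace the vertex `u` of `G` by `H`. -/
def Replace {V : Type*} (G : SimpleGraph V) (u : V) {W : Type*} (H : SimpleGraph W) :
    SimpleGraph ({v : V // v ≠ u} ⊕ W) where
  Adj x y :=
    match x, y with
    | Sum.inl a, Sum.inl b => G.Adj a.1 b.1
    | Sum.inl a, Sum.inr _ => G.Adj a.1 u
    | Sum.inr _, Sum.inl b => G.Adj u b.1
    | Sum.inr h1, Sum.inr h2 => H.Adj h1 h2
  symm := ⟨by rintro (a|a) (b|b) h <;> exact h.symm⟩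
  loopless := ⟨by rintro (a|a) h <;> exact h.ne rfl⟩

/-- `C_n^m`: the m-th power of the n-cycle, on vertex set `ZMod n`;
two vertices are adjacent iff their circular distance is between 1 and m. -/
def cyclePow (n m : ℕ) : SimpleGraph (ZMod n) where
  Adj i j := i ≠ j ∧ ∃ k : ℕ, 1 ≤ k ∧ k ≤ m ∧ (j = i + k ∨ i = j + k)
  symm := ⟨by
    rintro i j ⟨hne, k, h1, h2, h3⟩
    exact ⟨hne.symm, k, h1, h2, h3.symm⟩⟩
  loopless := ⟨fun i h => h.1 rfl⟩

/-- `P_n^m`: the m-th power of the n-path, on vertex set `Fin n`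
(vertex `i` represents the `(i+1)`-st vertex of the path);
two vertices adjacent iff their distance is between 1 and m. -/
def pathPow (n m : ℕ) : SimpleGraph (Fin n) where
  Adj i j := i ≠ j ∧ Nat.dist i.val j.val ≤ m
  symm := ⟨by
    rintro i j ⟨hne, hd⟩
    exact ⟨hne.symm, by rwa [Nat.dist_comm]⟩⟩
  loopless := ⟨fun i h => h.1 rfl⟩

end GrundyDom

/-!
Lower bound: play a Grundy dominating sequence of `H` in the fiber of every vertex of `I*`. When
`v, w ∈ K` have no common neighbour in `I*`, one more vertex `(v, h)` fits between the fibers of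
`I* ∩ N(v)` and those of `I* \ N(v)`: it footprints the fiber of `w`.

Upper bound: every play of a legal dominating sequence of `G ∘ H` footprints a vertex of its own
fiber or of the fiber over a neighbour. The fibers containing plays of the first kind form an
independent set `A` and receive at most `γ_gr(H)` footprints each; any other fiber receives at
most one. Of these other fibers, those over `I*` are independent from `A`, and at most one lies
over `K`. If moreover any two vertices of `K` have a common neighbour in `I*`, a fiber over `K`
forces `A ⊆ I*` and leaves a vertex of `I*` outside `A` and all footprinted fibers.
-/

namespace GrundyDom

section Legal

variable {V : Type*} {G : SimpleGraph V}

lemma mem_cn {x v : V} : x ∈ cn G v ↔ x = v ∨ G.Adj v x := by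
  simp [cn]

lemma self_mem_cn (v : V) : v ∈ cn G v := by simp [cn]

lemma mem_cnUnion {x : V} {L : List V} : x ∈ cnUnion G L ↔ ∃ v ∈ L, x ∈ cn G v := by
  simp [cnUnion]

@[simp] lemma cnUnion_nil : cnUnion G ([] : List V) = ∅ := by simp [cnUnion]

lemma cnUnion_append (L₁ L₂ : List V) :
    cnUnion G (L₁ ++ L₂) = cnUnion G L₁ ∪ cnUnion G L₂ := by
  ext x; simp [mem_cnUnion, or_and_right, exists_or]

@[simp] lemma cnUnion_cons (a : V) (L : List V) :
    cnUnion G (a :: L) = cn G a ∪ cnUnion G L :=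
  cnUnion_append [a] L |>.trans (by simp [cnUnion])

lemma mem_cnUnion_take {S : List V} {m : ℕ} {x : V} :
    x ∈ cnUnion G (S.take m) ↔ ∃ j : Fin S.length, j.val < m ∧ x ∈ cn G S[j] := by
  rw [mem_cnUnion]
  constructor
  · rintro ⟨v, hv, hx⟩
    obtain ⟨j, hj, rfl⟩ := List.mem_take_iff_getElem.mp hv
    exact ⟨⟨j, by omega⟩, by simp only; omega, by simpa using hx⟩
  · rintro ⟨j, hj, hx⟩
    exact ⟨S[j], List.mem_take_iff_getElem.mpr ⟨j, by omega, rfl⟩, hx⟩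

/-- Legality of a sequence that need not dominate, played once the vertices of `D` are
dominated. -/
def IsLegalFrom (G : SimpleGraph V) : Set V → List V → Prop
  | _, [] => True
  | D, a :: l => (cn G a \ D).Nonempty ∧ IsLegalFrom G (D ∪ cn G a) l

@[simp] lemma isLegalFrom_nil (D : Set V) : IsLegalFrom G D [] := trivial

lemma isLegalFrom_append {S₁ S₂ : List V} {D : Set V} :
    IsLegalFrom G D (S₁ ++ S₂) ↔ IsLegalFrom G D S₁ ∧ IsLegalFrom G (D ∪ cnUnion G S₁) S₂ := by
  induction S₁ generalizing D with
  | nil => simp [IsLegalFrom]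
  | cons a l ih => simp [IsLegalFrom, ih, Set.union_assoc, and_assoc]

lemma isLegalFrom_concat {S : List V} {D : Set V} {x : V} (hS : IsLegalFrom G D S)
    (hx : x ∉ D ∪ cnUnion G S) : IsLegalFrom G D (S ++ [x]) :=
  isLegalFrom_append.mpr ⟨hS, ⟨x, self_mem_cn x, hx⟩, trivial⟩

lemma isLegalFrom_iff {S : List V} {D : Set V} :
    IsLegalFrom G D S ↔
      ∀ i : Fin S.length, (cn G S[i] \ (D ∪ cnUnion G (S.take i))).Nonempty := by
  induction S generalizing D with
  | nil => simp
  | cons a l ih =>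
    simp only [IsLegalFrom, ih, Fin.forall_fin_succ, List.length_cons]
    simp [Set.union_assoc]

lemma IsLegalFrom.nodup {S : List V} {D : Set V} (h : IsLegalFrom G D S) : S.Nodup := by
  induction S generalizing D with
  | nil => simp
  | cons a l ih =>
    refine List.nodup_cons.mpr ⟨fun ha => ?_, ih h.2⟩
    obtain ⟨j, hj⟩ := List.mem_iff_get.mp ha
    obtain ⟨y, hy, hyD⟩ := isLegalFrom_iff.mp h.2 j
    exact hyD (Or.inl (Or.inr (by simpa [← hj] using hy)))

end Legal

section Grundy

variable {V : Type*} {G : SimpleGraph V}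

lemma isLegal_iff {S : List V} :
    IsLegal G S ↔ IsLegalFrom G ∅ S ∧ ∀ v, v ∈ cnUnion G S := by
  have hPN : ∀ i : Fin S.length,
      PN G S i (S.get i) = cn G S[i] \ (∅ ∪ cnUnion G (S.take i)) := by simp [PN]
  simp only [mem_cnUnion]
  exact ⟨fun h => ⟨isLegalFrom_iff.mpr fun i => hPN i ▸ h.legal i, h.dominates⟩,
    fun ⟨h, hdom⟩ => ⟨h.nodup, hdom, fun i => hPN i ▸ isLegalFrom_iff.mp h i⟩⟩

variable [Fintype V]

lemma exists_isLegal_of_isLegalFrom {S : List V} (hS : IsLegalFrom G ∅ S) :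
    ∃ T, IsLegal G T ∧ S.length ≤ T.length := by
  induction hn : Fintype.card V - S.length generalizing S with
  | zero =>
    refine ⟨S, isLegal_iff.mpr ⟨hS, fun v => ?_⟩, le_rfl⟩
    by_contra hv
    have := (isLegalFrom_concat hS (by simpa using hv)).nodup.length_le_card
    rw [List.length_append, List.length_singleton] at this
    omega
  | succ n ih =>
    by_cases hdom : ∀ v, v ∈ cnUnion G S
    · exact ⟨S, isLegal_iff.mpr ⟨hS, hdom⟩, le_rfl⟩
    push Not at hdom
    obtain ⟨x, hx⟩ := hdom
    obtain ⟨T, hT, hlen⟩ := ih (isLegalFrom_concat hS (by simpa using hx))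
      (by rw [List.length_append, List.length_singleton]; omega)
    rw [List.length_append, List.length_singleton] at hlen
    exact ⟨T, hT, by omega⟩

lemma bddAbove_legal_lengths : BddAbove {k | ∃ S : List V, IsLegal G S ∧ S.length = k} :=
  ⟨Fintype.card V, by rintro k ⟨S, hS, rfl⟩; exact hS.nodup.length_le_card⟩

lemma length_le_gammaGr {S : List V} (hS : IsLegalFrom G ∅ S) : S.length ≤ gammaGr G := by
  obtain ⟨T, hT, hlen⟩ := exists_isLegal_of_isLegalFrom hS
  exact hlen.trans (le_csSup bddAbove_legal_lengths ⟨T, hT, rfl⟩)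

lemma gammaGr_le {n : ℕ} (h : ∀ S, IsLegal G S → S.length ≤ n) : gammaGr G ≤ n := by
  obtain ⟨T, hT, -⟩ := exists_isLegal_of_isLegalFrom (G := G) (S := []) trivial
  exact csSup_le ⟨T.length, T, hT, rfl⟩ fun _ ⟨S, hS, hlen⟩ => hlen ▸ h S hS

lemma exists_isLegal_length_eq_gammaGr (G : SimpleGraph V) :
    ∃ S, IsLegal G S ∧ S.length = gammaGr G := by
  obtain ⟨T, hT, -⟩ := exists_isLegal_of_isLegalFrom (G := G) (S := []) trivial
  exact Nat.sSup_mem (s := {k | ∃ S, IsLegal G S ∧ S.length = k}) ⟨_, T, hT, rfl⟩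
    bddAbove_legal_lengths

lemma one_le_gammaGr [Nonempty V] (G : SimpleGraph V) : 1 ≤ gammaGr G := by
  obtain ⟨S, hS, hlen⟩ := exists_isLegal_length_eq_gammaGr G
  obtain ⟨u, hu, -⟩ := hS.dominates (Classical.arbitrary V)
  rw [← hlen, Nat.one_le_iff_ne_zero, Ne, List.length_eq_zero_iff]
  exact List.ne_nil_of_mem hu

end Grundy

section Private

variable {V : Type*} {G : SimpleGraph V}

lemma isLegalFrom_of_private {S : List V} {D : Set V}
    (h : ∀ i : Fin S.length, ∃ k ∈ cn G S[i], k ∉ D ∧ ∀ j : Fin S.length, j < i → k ∉ cn G S[j]) :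
    IsLegalFrom G D S := by
  refine isLegalFrom_iff.mpr fun i => ?_
  obtain ⟨k, hk, hkD, hkj⟩ := h i
  refine ⟨k, hk, ?_⟩
  rintro (hD | hprev)
  · exact hkD hD
  · obtain ⟨j, hj, hkj'⟩ := mem_cnUnion_take.mp hprev
    exact hkj j hj hkj'

lemma isLegalFrom_sort_map {ι : Type*} [LinearOrder ι] (F : Finset ι) (f : ι → V)
    (h : ∀ i ∈ F, ∃ k ∈ cn G (f i), ∀ j ∈ F, j < i → k ∉ cn G (f j)) :
    IsLegalFrom G ∅ ((F.sort (· ≤ ·)).map f) := by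
  refine isLegalFrom_of_private fun i => ?_
  have hi : i.val < (F.sort (· ≤ ·)).length := by simpa using i.isLt
  obtain ⟨k, hk, hkj⟩ := h _ ((Finset.mem_sort _).mp (List.getElem_mem hi))
  refine ⟨k, by simpa using hk, Set.notMem_empty k, fun j hji => ?_⟩
  have hj : j.val < (F.sort (· ≤ ·)).length := by simpa using j.isLt
  have hlt := (Finset.sortedLT_sort F).pairwise.rel_get_of_lt
    (show (⟨j.val, hj⟩ : Fin _) < ⟨i.val, hi⟩ from hji)
  simpa using hkj _ ((Finset.mem_sort _).mp (List.getElem_mem hj)) hlt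

variable [Fintype V]

lemma card_le_gammaGr_of_private {ι : Type*} [LinearOrder ι] (F : Finset ι) (f : ι → V)
    (h : ∀ i ∈ F, ∃ k ∈ cn G (f i), ∀ j ∈ F, j < i → k ∉ cn G (f j)) :
    F.card ≤ gammaGr G := by
  simpa using length_le_gammaGr (isLegalFrom_sort_map F f h)

lemma card_lt_gammaGr_of_private {ι : Type*} [LinearOrder ι] (F : Finset ι) (f : ι → V)
    (h : ∀ i ∈ F, ∃ k ∈ cn G (f i), ∀ j ∈ F, j < i → k ∉ cn G (f j))
    {k₀ : V} (hk₀ : ∀ j ∈ F, k₀ ∉ cn G (f j)) :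
    F.card < gammaGr G := by
  have hnew : k₀ ∉ ∅ ∪ cnUnion G ((F.sort (· ≤ ·)).map f) := by
    simpa [mem_cnUnion] using hk₀
  simpa using length_le_gammaGr (isLegalFrom_concat (isLegalFrom_sort_map F f h) hnew)

end Private

section LexProduct

variable {V W : Type*} {G : SimpleGraph V} {H : SimpleGraph W}

lemma mem_cn_lex {a c : V} {b d : W} :
    (a, b) ∈ cn (Lex G H) (c, d) ↔ G.Adj c a ∨ (a = c ∧ b ∈ cn H d) := by
  simp only [mem_cn, Prod.mk.injEq]
  change _ ∨ (G.Adj c a ∨ (c = a ∧ H.Adj d b)) ↔ _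
  constructor
  · rintro (⟨rfl, rfl⟩ | h | ⟨rfl, h⟩) <;> simp_all
  · rintro (h | ⟨rfl, rfl | h⟩) <;> simp_all

lemma mem_cnUnion_lex_map {x a : V} {b : W} {T : List W}
    (h : (a, b) ∈ cnUnion (Lex G H) (T.map (Prod.mk x))) : a = x ∨ G.Adj x a := by
  obtain ⟨_, hv, hmem⟩ := mem_cnUnion.mp h
  obtain ⟨k, -, rfl⟩ := List.mem_map.mp hv
  rcases mem_cn_lex.mp hmem with hadj | ⟨rfl, -⟩
  · exact Or.inr hadj
  · exact Or.inl rfl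

lemma mem_cnUnion_lex_flatMap {a : V} {b : W} {xs : List V} {T : List W}
    (h : (a, b) ∈ cnUnion (Lex G H) (xs.flatMap fun x => T.map (Prod.mk x))) :
    a ∈ xs ∨ ∃ x ∈ xs, G.Adj x a := by
  induction xs with
  | nil => simp at h
  | cons x l ih =>
    rw [List.flatMap_cons, cnUnion_append] at h
    rcases h with h | h
    · rcases mem_cnUnion_lex_map h with rfl | hadj
      · exact Or.inl List.mem_cons_self
      · exact Or.inr ⟨x, List.mem_cons_self, hadj⟩
    · rcases ih h with hl | ⟨y, hy, hadj⟩
      · exact Or.inl (List.mem_cons_of_mem x hl)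
      · exact Or.inr ⟨y, List.mem_cons_of_mem x hy, hadj⟩

lemma isLegalFrom_lex_map {x : V} {T : List W} {E : Set (V × W)}
    (hT : IsLegalFrom H {k | (x, k) ∈ E} T) : IsLegalFrom (Lex G H) E (T.map (Prod.mk x)) := by
  induction T generalizing E with
  | nil => trivial
  | cons a l ih =>
    obtain ⟨⟨y, hy, hyE⟩, hl⟩ := hT
    refine ⟨⟨(x, y), mem_cn_lex.mpr (Or.inr ⟨rfl, hy⟩), hyE⟩, ih ?_⟩
    convert hl using 2
    ext k
    simp [mem_cn_lex]

lemma isLegalFrom_lex_flatMap {T : List W} (hT : IsLegalFrom H ∅ T) {xs : List V}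
    (hxs : xs.Pairwise fun a b => a ≠ b ∧ ¬G.Adj a b) {E : Set (V × W)}
    (hE : ∀ x ∈ xs, ∀ k, (x, k) ∉ E) :
    IsLegalFrom (Lex G H) E (xs.flatMap fun x => T.map (Prod.mk x)) := by
  induction xs generalizing E with
  | nil => trivial
  | cons x l ih =>
    rw [List.flatMap_cons, isLegalFrom_append]
    obtain ⟨hx, hl⟩ := List.pairwise_cons.mp hxs
    refine ⟨isLegalFrom_lex_map ?_, ih hl fun y hy k => ?_⟩
    · convert hT
      ext k
      simpa using hE x List.mem_cons_self k
    · rintro (hyE | hy')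
      · exact hE y (List.mem_cons_of_mem x hy) k hyE
      · rcases mem_cnUnion_lex_map hy' with rfl | hadj
        · exact (hx _ hy).1 rfl
        · exact (hx y hy).2 hadj

end LexProduct

section SplitGraph

variable {V : Type*} {G : SimpleGraph V} {K Iv : Finset V}

lemma IsIndep.mono {I J : Set V} (hJ : IsIndep G J) (h : I ⊆ J) : IsIndep G I :=
  fun _ hu _ hv => hJ (h hu) (h hv)

lemma IsIndep.pairwise_toList {s : Finset V} (hs : IsIndep G ↑s) :
    s.toList.Pairwise fun a b => a ≠ b ∧ ¬G.Adj a b :=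
  s.nodup_toList.pairwise_of_forall_ne fun _ ha _ hb hne =>
    ⟨hne, hs (Finset.mem_toList.mp ha) (Finset.mem_toList.mp hb) hne⟩

lemma exists_adj_of_mem_clique [DecidableEq V] (hdisj : Disjoint K Iv) (hIv : IsIndep G ↑Iv)
    (hmaxind : ∀ J : Finset V, IsIndep G ↑J → J.card ≤ Iv.card) {u : V} (hu : u ∈ K) :
    ∃ x ∈ Iv, G.Adj u x := by
  by_contra! hc
  have hJ : IsIndep G ↑(insert u Iv) := by
    intro a ha b hb hne hadj
    simp only [Finset.coe_insert, Set.mem_insert_iff, Finset.mem_coe] at ha hb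
    rcases ha with rfl | ha <;> rcases hb with rfl | hb
    · exact hne rfl
    · exact hc b hb hadj
    · exact hc a ha hadj.symm
    · exact hIv ha hb hne hadj
  have hcard := hmaxind _ hJ
  rw [Finset.card_insert_of_notMem (Finset.disjoint_left.mp hdisj hu)] at hcard
  omega

lemma mem_clique_of_adj (hpart : ∀ v, v ∈ K ∨ v ∈ Iv) (hIv : IsIndep G ↑Iv)
    {z y : V} (hy : y ∈ Iv) (hadj : G.Adj z y) : z ∈ K :=
  (hpart z).resolve_right fun hz => hIv hz hy hadj.ne hadj

end SplitGraph

section LowerBound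

variable {V W : Type*} [Fintype V] [Fintype W] {G : SimpleGraph V} {H : SimpleGraph W}

lemma card_mul_le_gammaGr_lex {I : Finset V} (hI : IsIndep G ↑I) :
    I.card * gammaGr H ≤ gammaGr (Lex G H) := by
  obtain ⟨T, hT, hlen⟩ := exists_isLegal_length_eq_gammaGr H
  have hS := isLegalFrom_lex_flatMap (isLegal_iff.mp hT).1 hI.pairwise_toList
    (E := ∅) fun _ _ _ h => h
  simpa [List.length_flatMap, hlen] using length_le_gammaGr hS

lemma card_mul_add_one_le_gammaGr_lex [Nonempty W] [DecidableRel G.Adj] {I : Finset V}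
    (hI : IsIndep G ↑I) {v w : V} (hv : v ∉ I) (hw : w ∉ I) (hvw : G.Adj v w)
    (hvw_common : ∀ x ∈ I, G.Adj v x → ¬G.Adj w x) :
    I.card * gammaGr H + 1 ≤ gammaGr (Lex G H) := by
  obtain ⟨T, hT, hlen⟩ := exists_isLegal_length_eq_gammaGr H
  have hT' := (isLegal_iff.mp hT).1
  set I₁ := I.filter (G.Adj v)
  set I₂ := I.filter fun x => ¬G.Adj v x
  set k₀ := Classical.arbitrary W
  set L₁ := I₁.toList.flatMap fun x => T.map (Prod.mk x)
  set L₂ := I₂.toList.flatMap fun x => T.map (Prod.mk x)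
  have hI₁ : IsIndep G ↑I₁ := hI.mono (Finset.coe_subset.mpr (Finset.filter_subset _ _))
  have hI₂ : IsIndep G ↑I₂ := hI.mono (Finset.coe_subset.mpr (Finset.filter_subset _ _))
  have hL₁ : IsLegalFrom (Lex G H) ∅ L₁ :=
    isLegalFrom_lex_flatMap hT' hI₁.pairwise_toList fun _ _ _ h => h
  have hv' : IsLegalFrom (Lex G H) (∅ ∪ cnUnion (Lex G H) L₁) [(v, k₀)] := by
    refine ⟨⟨(w, k₀), mem_cn_lex.mpr (Or.inl hvw), ?_⟩, trivial⟩
    rintro (h | h)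
    · exact h
    rcases mem_cnUnion_lex_flatMap h with hwI | ⟨x, hx, hxw⟩
    · exact hw (Finset.mem_filter.mp (Finset.mem_toList.mp hwI)).1
    · obtain ⟨hxI, hvx⟩ := Finset.mem_filter.mp (Finset.mem_toList.mp hx)
      exact hvw_common x hxI hvx hxw.symm
  have hL₂ : IsLegalFrom (Lex G H)
      (∅ ∪ cnUnion (Lex G H) L₁ ∪ cnUnion (Lex G H) [(v, k₀)]) L₂ := by
    refine isLegalFrom_lex_flatMap hT' hI₂.pairwise_toList fun y hy k => ?_
    obtain ⟨hyI, hvy⟩ := Finset.mem_filter.mp (Finset.mem_toList.mp hy)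
    rintro ((h | h) | h)
    · exact h
    · rcases mem_cnUnion_lex_flatMap h with hyI₁ | ⟨x, hx, hxy⟩
      · exact hvy (Finset.mem_filter.mp (Finset.mem_toList.mp hyI₁)).2
      · obtain ⟨hxI, hvx⟩ := Finset.mem_filter.mp (Finset.mem_toList.mp hx)
        exact hI hxI hyI (fun hxy' => hvy (hxy' ▸ hvx)) hxy
    · rcases mem_cnUnion_lex_map (T := [k₀]) (by simpa using h) with rfl | hadj
      · exact hv hyI
      · exact hvy hadj
  have hS := isLegalFrom_append.mpr ⟨hL₁, isLegalFrom_append.mpr ⟨hv', hL₂⟩⟩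
  have hcard : I₁.card + I₂.card = I.card := Finset.card_filter_add_card_filter_not _
  have hlen' := length_le_gammaGr hS
  simp only [L₁, L₂, List.length_append, List.length_flatMap, List.length_map, hlen,
    List.map_const', List.sum_replicate, Finset.length_toList, smul_eq_mul,
    List.length_singleton] at hlen'
  rw [← hcard, add_mul]
  omega

end LowerBound

section Plays

variable {V W : Type*} {G : SimpleGraph V} {H : SimpleGraph W} {S : List (V × W)}
  {i j : Fin S.length}

lemma mk_mem_cnUnion_take_of_adj {m : ℕ} (hj : j.val < m) {a : V} (h : G.Adj S[j].1 a)
    (b : W) : (a, b) ∈ cnUnion (Lex G H) (S.take m) :=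
  mem_cnUnion_take.mpr ⟨j, hj, mem_cn_lex.mpr (Or.inl h)⟩

lemma mk_mem_cnUnion_take_of_mem_cn {m : ℕ} (hj : j.val < m) {b : W} (h : b ∈ cn H S[j].2) :
    (S[j].1, b) ∈ cnUnion (Lex G H) (S.take m) :=
  mem_cnUnion_take.mpr ⟨j, hj, mem_cn_lex.mpr (Or.inr ⟨rfl, h⟩)⟩

variable (G H S) in
/-- The fiber of `v ∈ V` is `{v} × W`; play `i` footprints a vertex of its own fiber. -/
def FootprintsOwnFiber (i : Fin S.length) : Prop :=
  ∃ k ∈ cn H S[i].2, (S[i].1, k) ∉ cnUnion (Lex G H) (S.take i)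

variable (G H S) in
def FootprintsAdjFiber (i : Fin S.length) (y : V) : Prop :=
  G.Adj S[i].1 y ∧ ∃ k, (y, k) ∉ cnUnion (Lex G H) (S.take i)

lemma FootprintsOwnFiber.not_adj (hj : FootprintsOwnFiber G H S j) (hij : i < j) :
    ¬G.Adj S[i].1 S[j].1 := fun hadj => by
  obtain ⟨k, -, hk⟩ := hj
  exact hk (mk_mem_cnUnion_take_of_adj hij hadj k)

lemma FootprintsAdjFiber.not_adj {y : V} (hi : FootprintsAdjFiber G H S i y) (hji : j < i) :
    ¬G.Adj S[j].1 y := fun hadj => by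
  obtain ⟨-, k, hk⟩ := hi
  exact hk (mk_mem_cnUnion_take_of_adj hji hadj k)

lemma footprintsOwnFiber_or_exists_footprintsAdjFiber (hS : IsLegal (Lex G H) S)
    (i : Fin S.length) : FootprintsOwnFiber G H S i ∨ ∃ y, FootprintsAdjFiber G H S i y := by
  obtain ⟨⟨a, b⟩, hq, hqnew⟩ := hS.legal i
  rcases mem_cn_lex.mp hq with hadj | ⟨rfl, hb⟩
  · exact Or.inr ⟨a, hadj, b, hqnew⟩
  · exact Or.inl ⟨b, hb, hqnew⟩

/-- The fiber of a play that does not footprint its own fiber was dominated earlier, and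
not from inside (that would also dominate the fiber it footprints). -/
lemma exists_adj_of_not_footprintsOwnFiber (hS : IsLegal (Lex G H) S)
    (hi : ¬FootprintsOwnFiber G H S i) : ∃ j < i, G.Adj S[j].1 S[i].1 := by
  have hdom : (S[i].1, S[i].2) ∈ cnUnion (Lex G H) (S.take i) := by
    by_contra h
    exact hi ⟨S[i].2, self_mem_cn _, h⟩
  obtain ⟨j, hji, hj⟩ := mem_cnUnion_take.mp hdom
  rcases mem_cn_lex.mp hj with hadj | ⟨heq, -⟩
  · exact ⟨j, hji, hadj⟩
  · obtain ⟨y, hy⟩ := (footprintsOwnFiber_or_exists_footprintsAdjFiber hS i).resolve_left hi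
    exact absurd (heq ▸ hy.1) (hy.not_adj hji)

lemma eq_of_not_footprintsOwnFiber (hS : IsLegal (Lex G H) S)
    (hi : ¬FootprintsOwnFiber G H S i) (hj : S[j].1 = S[i].1) : j = i := by
  obtain ⟨y, hy⟩ := (footprintsOwnFiber_or_exists_footprintsAdjFiber hS i).resolve_left hi
  rcases lt_trichotomy j i with hji | rfl | hij
  · exact absurd (hj ▸ hy.1) (hy.not_adj hji)
  · rfl
  · obtain ⟨⟨a, b⟩, hq, hqnew⟩ := hS.legal j
    rcases mem_cn_lex.mp hq with hadj | ⟨rfl, -⟩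
    · exact (hqnew (mk_mem_cnUnion_take_of_adj hij (hj ▸ hadj) b)).elim
    · obtain ⟨l, hli, hl⟩ := exists_adj_of_not_footprintsOwnFiber hS hi
      exact (hqnew (mk_mem_cnUnion_take_of_adj (hli.trans hij) (hj ▸ hl) b)).elim

end Plays

section Counting

variable {V W : Type*} {G : SimpleGraph V} {H : SimpleGraph W} {S : List (V × W)}
  {i j : Fin S.length}

variable (G H S) in
def IsFootprintMap (φ : Fin S.length → V) : Prop :=
  ∀ i, (FootprintsOwnFiber G H S i → φ i = S[i].1) ∧
    (¬FootprintsOwnFiber G H S i → FootprintsAdjFiber G H S i (φ i))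

lemma exists_isFootprintMap (hS : IsLegal (Lex G H) S) : ∃ φ, IsFootprintMap G H S φ := by
  have h i : ∃ y, (FootprintsOwnFiber G H S i → y = S[i].1) ∧
      (¬FootprintsOwnFiber G H S i → FootprintsAdjFiber G H S i y) := by
    by_cases hi : FootprintsOwnFiber G H S i
    · exact ⟨S[i].1, fun _ => rfl, fun h => absurd hi h⟩
    · obtain ⟨y, hy⟩ := (footprintsOwnFiber_or_exists_footprintsAdjFiber hS i).resolve_left hi
      exact ⟨y, fun h => absurd h hi, fun _ => hy⟩
  choose φ hφ using h
  exact ⟨φ, hφ⟩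

open Classical in
variable (G H S) in
noncomputable def ownFibers : Finset V :=
  (Finset.univ.filter (FootprintsOwnFiber G H S)).image fun i => S[i].1

lemma mem_ownFibers {x : V} :
    x ∈ ownFibers G H S ↔ ∃ i, FootprintsOwnFiber G H S i ∧ S[i].1 = x := by
  simp [ownFibers]

open Classical in
variable (G H S) in
noncomputable def ownFiberPlays (x : V) : Finset (Fin S.length) :=
  Finset.univ.filter fun i => FootprintsOwnFiber G H S i ∧ S[i].1 = x

open Classical in
variable (G H S) in
noncomputable def adjFiberPlays (x : V) : Finset (Fin S.length) :=
  Finset.univ.filter fun i => FootprintsAdjFiber G H S i x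

lemma mem_ownFiberPlays {x : V} :
    i ∈ ownFiberPlays G H S x ↔ FootprintsOwnFiber G H S i ∧ S[i].1 = x := by
  simp [ownFiberPlays]

lemma mem_adjFiberPlays {x : V} : i ∈ adjFiberPlays G H S x ↔ FootprintsAdjFiber G H S i x := by
  simp [adjFiberPlays]

lemma ownFiberPlays_nonempty_iff {x : V} :
    (ownFiberPlays G H S x).Nonempty ↔ x ∈ ownFibers G H S := by
  simp [Finset.Nonempty, mem_ownFiberPlays, mem_ownFibers]

lemma card_adjFiberPlays_le_one (x : V) : (adjFiberPlays G H S x).card ≤ 1 := by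
  refine Finset.card_le_one.mpr fun i hi j hj => ?_
  rw [mem_adjFiberPlays] at hi hj
  rcases lt_trichotomy i j with hij | rfl | hji
  · exact absurd hi.1 (hj.not_adj hij)
  · rfl
  · exact absurd hj.1 (hi.not_adj hji)

lemma exists_private_of_mem_ownFiberPlays {x : V} (hi : i ∈ ownFiberPlays G H S x) :
    ∃ k ∈ cn H S[i].2, ∀ j ∈ ownFiberPlays G H S x, j < i → k ∉ cn H S[j].2 := by
  obtain ⟨⟨k, hk, hknew⟩, rfl⟩ := mem_ownFiberPlays.mp hi
  refine ⟨k, hk, fun j hj hji hkj => hknew ?_⟩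
  rw [← (mem_ownFiberPlays.mp hj).2]
  exact mk_mem_cnUnion_take_of_mem_cn hji hkj

variable [Fintype W]

lemma card_ownFiberPlays_le (x : V) : (ownFiberPlays G H S x).card ≤ gammaGr H :=
  card_le_gammaGr_of_private _ (fun i : Fin S.length => S[i].2) fun _ hi =>
    exists_private_of_mem_ownFiberPlays hi

/-- If a play footprints the fiber over `x` from a neighbour, the plays footprinting their own
fiber there all come earlier and leave a vertex of it undominated. -/
lemma card_ownFiberPlays_lt {x : V} (hi : i ∈ adjFiberPlays G H S x) :
    (ownFiberPlays G H S x).card < gammaGr H := by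
  obtain ⟨hadj, k₀, hk₀⟩ := mem_adjFiberPlays.mp hi
  refine card_lt_gammaGr_of_private _ (fun i : Fin S.length => S[i].2)
    (fun _ hj => exists_private_of_mem_ownFiberPlays hj) (k₀ := k₀) fun j hj hk => hk₀ ?_
  obtain ⟨hjown, rfl⟩ := mem_ownFiberPlays.mp hj
  have hji : j < i := by
    rcases lt_trichotomy j i with hji | rfl | hij
    · exact hji
    · exact absurd hadj (G.loopless.irrefl _)
    · exact absurd hadj (hjown.not_adj hij)
  exact mk_mem_cnUnion_take_of_mem_cn hji hk

variable [DecidableEq V]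

lemma card_filter_eq_le {φ : Fin S.length → V} (hφ : IsFootprintMap G H S φ) (x : V) :
    (Finset.univ.filter (φ · = x)).card ≤
      if x ∈ ownFibers G H S then gammaGr H else 1 := by
  have hsub : Finset.univ.filter (φ · = x) ⊆ ownFiberPlays G H S x ∪ adjFiberPlays G H S x := by
    intro i hi
    rw [Finset.mem_filter] at hi
    by_cases hown : FootprintsOwnFiber G H S i
    · exact Finset.mem_union_left _ (mem_ownFiberPlays.mpr ⟨hown, ((hφ i).1 hown).symm.trans hi.2⟩)
    · exact Finset.mem_union_right _ (mem_adjFiberPlays.mpr (hi.2 ▸ (hφ i).2 hown))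
  refine (Finset.card_le_card hsub).trans ((Finset.card_union_le _ _).trans ?_)
  have hadj := card_adjFiberPlays_le_one (G := G) (H := H) (S := S) x
  split_ifs with hx
  · rcases (adjFiberPlays G H S x).eq_empty_or_nonempty with he | ⟨i, hi⟩
    · simpa [he] using card_ownFiberPlays_le x
    · have := card_ownFiberPlays_lt hi
      omega
  · rw [← ownFiberPlays_nonempty_iff, Finset.not_nonempty_iff_eq_empty] at hx
    simpa [hx] using hadj

/-- Each fiber receives at most `γ_gr(H)` footprints if it contains a play footprinting its own
fiber, and at most one otherwise. -/
lemma length_le_of_isFootprintMap {φ : Fin S.length → V}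
    (hφ : IsFootprintMap G H S φ) :
    S.length ≤ (ownFibers G H S).card * gammaGr H +
      (Finset.univ.image φ \ ownFibers G H S).card := by
  set A := ownFibers G H S
  set T := Finset.univ.image φ
  calc S.length = ∑ x ∈ T, (Finset.univ.filter (φ · = x)).card := by
        simpa using Finset.card_eq_sum_card_image φ Finset.univ
    _ ≤ ∑ x ∈ T, if x ∈ A then gammaGr H else 1 :=
        Finset.sum_le_sum fun x _ => card_filter_eq_le hφ x
    _ = (T ∩ A).card * gammaGr H + (T \ A).card := by
        rw [← Finset.sum_inter_add_sum_sdiff T A]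
        congr 1
        · rw [Finset.sum_congr rfl fun x hx => if_pos (Finset.mem_inter.mp hx).2]
          simp
        · rw [Finset.sum_congr rfl fun x hx => if_neg (Finset.mem_sdiff.mp hx).2]
          simp
    _ ≤ A.card * gammaGr H + (T \ A).card := by
        gcongr
        exact Finset.inter_subset_right

end Counting

section SplitUpperBound

variable {V W : Type*} {G : SimpleGraph V} {H : SimpleGraph W} {S : List (V × W)}
  {i j : Fin S.length} {φ : Fin S.length → V}

lemma IsFootprintMap.not_footprintsOwnFiber (hφ : IsFootprintMap G H S φ)
    (hi : φ i ∉ ownFibers G H S) : ¬FootprintsOwnFiber G H S i := fun hown =>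
  hi (mem_ownFibers.mpr ⟨i, hown, ((hφ i).1 hown).symm⟩)

lemma IsFootprintMap.footprintsAdjFiber (hφ : IsFootprintMap G H S φ)
    (hi : φ i ∉ ownFibers G H S) : FootprintsAdjFiber G H S i (φ i) :=
  (hφ i).2 (hφ.not_footprintsOwnFiber hi)

lemma IsFootprintMap.ne_of_le (hS : IsLegal (Lex G H) S) (hφ : IsFootprintMap G H S φ)
    (hi : φ i ∉ ownFibers G H S) (hji : j ≤ i) : S[j].1 ≠ φ i := by
  intro hj
  rcases hji.lt_or_eq with hji | rfl
  · by_cases hown : FootprintsOwnFiber G H S j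
    · exact hi (mem_ownFibers.mpr ⟨j, hown, hj⟩)
    · obtain ⟨l, hlj, hl⟩ := exists_adj_of_not_footprintsOwnFiber hS hown
      exact (hφ.footprintsAdjFiber hi).not_adj (hlj.trans hji) (hj ▸ hl)
  · exact G.loopless.irrefl _ (hj ▸ (hφ.footprintsAdjFiber hi).1)

variable {K Iv : Finset V}

lemma fst_mem_clique_of_mem_clique (hpart : ∀ v, v ∈ K ∨ v ∈ Iv) (hK : G.IsClique ↑K)
    (hIv : IsIndep G ↑Iv) (hS : IsLegal (Lex G H) S) (hφ : IsFootprintMap G H S φ)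
    (hi : φ i ∉ ownFibers G H S) (hiK : φ i ∈ K) : S[i].1 ∈ K := by
  refine (hpart _).resolve_right fun hiIv => ?_
  obtain ⟨j, hji, hj⟩ := exists_adj_of_not_footprintsOwnFiber hS (hφ.not_footprintsOwnFiber hi)
  have hjK := mem_clique_of_adj hpart hIv hiIv hj
  exact (hφ.footprintsAdjFiber hi).not_adj hji
    (hK hjK hiK (hφ.ne_of_le hS hi hji.le))

lemma not_adj_of_mem_ownFibers_of_mem_clique (hK : G.IsClique ↑K) (hS : IsLegal (Lex G H) S)
    (hφ : IsFootprintMap G H S φ) (hi : φ i ∉ ownFibers G H S) (hiK : S[i].1 ∈ K) {u : V}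
    (hu : u ∈ ownFibers G H S) (huK : u ∈ K) : ¬G.Adj u (φ i) := by
  intro hadj
  obtain ⟨j, hown, rfl⟩ := mem_ownFibers.mp hu
  have hnown := hφ.not_footprintsOwnFiber hi
  rcases lt_trichotomy j i with hji | rfl | hij
  · exact (hφ.footprintsAdjFiber hi).not_adj hji hadj
  · exact hnown hown
  · have hne : S[i].1 ≠ S[j].1 := fun he =>
      hij.ne (eq_of_not_footprintsOwnFiber hS hnown he.symm).symm
    exact hown.not_adj hij (hK hiK huK hne)

lemma isIndep_ownFibers : IsIndep G ↑(ownFibers G H S) := by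
  intro x hx y hy hxy hadj
  obtain ⟨i, hi, rfl⟩ := mem_ownFibers.mp hx
  obtain ⟨j, hj, rfl⟩ := mem_ownFibers.mp hy
  rcases lt_trichotomy i j with hij | rfl | hji
  · exact hj.not_adj hij hadj
  · exact hxy rfl
  · exact hi.not_adj hji hadj.symm

lemma notMem_ownFibers_of_adj_of_adj (hφ : IsFootprintMap G H S φ)
    (hi : φ i ∉ ownFibers G H S) {x : V} (hx : G.Adj S[i].1 x) (hxi : G.Adj (φ i) x) :
    x ∉ ownFibers G H S := by
  intro hxA
  obtain ⟨j, hown, rfl⟩ := mem_ownFibers.mp hxA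
  rcases lt_trichotomy j i with hji | rfl | hij
  · exact (hφ.footprintsAdjFiber hi).not_adj hji hxi.symm
  · exact hφ.not_footprintsOwnFiber hi hown
  · exact hown.not_adj hij hx

lemma ne_of_adj_of_adj (hpart : ∀ v, v ∈ K ∨ v ∈ Iv) (hK : G.IsClique ↑K)
    (hIv : IsIndep G ↑Iv) (hS : IsLegal (Lex G H) S) (hφ : IsFootprintMap G H S φ)
    (hi : φ i ∉ ownFibers G H S) (hiK : φ i ∈ K) {x : V} (hxIv : x ∈ Iv) (hx : G.Adj S[i].1 x)
    (hxi : G.Adj (φ i) x) (j : Fin S.length) : φ j ≠ x := by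
  rintro rfl
  have hj := hφ.footprintsAdjFiber (notMem_ownFibers_of_adj_of_adj hφ hi hx hxi)
  rcases lt_trichotomy j i with hji | rfl | hij
  · have hjK := mem_clique_of_adj hpart hIv hxIv hj.1
    exact (hφ.footprintsAdjFiber hi).not_adj hji (hK hjK hiK (hφ.ne_of_le hS hi hji.le))
  · exact G.loopless.irrefl _ hxi
  · exact hj.not_adj hij hx

variable [DecidableEq V]

lemma card_filter_mem_clique_le_one (hpart : ∀ v, v ∈ K ∨ v ∈ Iv) (hK : G.IsClique ↑K)
    (hIv : IsIndep G ↑Iv) (hS : IsLegal (Lex G H) S) (hφ : IsFootprintMap G H S φ) :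
    ((Finset.univ.image φ \ ownFibers G H S).filter (· ∈ K)).card ≤ 1 := by
  have key : ∀ i j, i < j → φ i ∉ ownFibers G H S → φ j ∉ ownFibers G H S → φ i ∈ K →
      φ j ∈ K → False := fun i j hij hi hj hiK hjK =>
    (hφ.footprintsAdjFiber hj).not_adj hij <|
      hK (fst_mem_clique_of_mem_clique hpart hK hIv hS hφ hi hiK) hjK (hφ.ne_of_le hS hj hij.le)
  refine Finset.card_le_one.mpr ?_
  simp only [Finset.mem_filter, Finset.mem_sdiff, Finset.mem_image, Finset.mem_univ, true_and]
  rintro _ ⟨⟨⟨i, rfl⟩, hi⟩, hiK⟩ _ ⟨⟨⟨j, rfl⟩, hj⟩, hjK⟩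
  rcases lt_trichotomy i j with hij | rfl | hji
  · exact (key i j hij hi hj hiK hjK).elim
  · rfl
  · exact (key j i hji hj hi hjK hiK).elim

lemma card_ownFibers_add_card_filter_notMem_le (hpart : ∀ v, v ∈ K ∨ v ∈ Iv)
    (hK : G.IsClique ↑K) (hIv : IsIndep G ↑Iv)
    (hmaxind : ∀ J : Finset V, IsIndep G ↑J → J.card ≤ Iv.card) (hS : IsLegal (Lex G H) S)
    (hφ : IsFootprintMap G H S φ) :
    (ownFibers G H S).card + ((Finset.univ.image φ \ ownFibers G H S).filter (· ∉ K)).card ≤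
      Iv.card := by
  set A := ownFibers G H S
  set B := (Finset.univ.image φ \ A).filter (· ∉ K)
  have hBIv : ∀ y ∈ B, y ∈ Iv := fun y hy => (hpart y).resolve_left (Finset.mem_filter.mp hy).2
  have hAB : ∀ u ∈ A, ∀ y ∈ B, ¬G.Adj u y := by
    intro u hu y hy hadj
    have hyIv := hBIv y hy
    simp only [B, Finset.mem_filter, Finset.mem_sdiff, Finset.mem_image, Finset.mem_univ,
      true_and] at hy
    obtain ⟨⟨⟨i, rfl⟩, hi⟩, -⟩ := hy
    rcases hpart u with huK | huIv
    · have hiK := mem_clique_of_adj hpart hIv hyIv (hφ.footprintsAdjFiber hi).1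
      exact not_adj_of_mem_ownFibers_of_mem_clique hK hS hφ hi hiK hu huK hadj
    · exact hIv huIv hyIv hadj.ne hadj
  have hind : IsIndep G ↑(A ∪ B) := by
    intro a ha b hb hab hadj
    simp only [Finset.coe_union, Set.mem_union, Finset.mem_coe] at ha hb
    rcases ha with ha | ha <;> rcases hb with hb | hb
    · exact isIndep_ownFibers ha hb hab hadj
    · exact hAB a ha b hb hadj
    · exact hAB b hb a ha hadj.symm
    · exact hIv (hBIv a ha) (hBIv b hb) hab hadj
  have hdisj : Disjoint A B := Finset.disjoint_left.mpr fun a ha hb =>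
    (Finset.mem_sdiff.mp (Finset.mem_filter.mp hb).1).2 ha
  simpa [Finset.card_union_of_disjoint hdisj] using hmaxind _ hind

lemma card_ownFibers_add_card_le_of_forall_common_nbr (hpart : ∀ v, v ∈ K ∨ v ∈ Iv)
    (hK : G.IsClique ↑K) (hIv : IsIndep G ↑Iv)
    (hmaxind : ∀ J : Finset V, IsIndep G ↑J → J.card ≤ Iv.card) (hS : IsLegal (Lex G H) S)
    (hφ : IsFootprintMap G H S φ) (hcommon : ∀ v ∈ K, ∀ w ∈ K, ∃ x ∈ Iv, G.Adj v x ∧ G.Adj w x) :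
    (ownFibers G H S).card + (Finset.univ.image φ \ ownFibers G H S).card ≤ Iv.card := by
  have hB₀ := card_filter_mem_clique_le_one hpart hK hIv hS hφ
  have hB₁ := card_ownFibers_add_card_filter_notMem_le hpart hK hIv hmaxind hS hφ
  set A := ownFibers G H S
  set B := Finset.univ.image φ \ A
  have hsplit := Finset.card_filter_add_card_filter_not (s := B) (· ∈ K)
  rcases (B.filter (· ∈ K)).eq_empty_or_nonempty with hB₀_empty | ⟨_, hy⟩
  · rw [hB₀_empty, Finset.card_empty] at hsplit
    omega
  simp only [B, Finset.mem_filter, Finset.mem_sdiff, Finset.mem_image, Finset.mem_univ,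
    true_and] at hy
  obtain ⟨⟨⟨i, rfl⟩, hi⟩, hiK⟩ := hy
  have hhostK := fst_mem_clique_of_mem_clique hpart hK hIv hS hφ hi hiK
  obtain ⟨x, hxIv, hx, hxi⟩ := hcommon _ hhostK _ hiK
  have hAIv : A ⊆ Iv := fun u hu => (hpart u).resolve_left fun huK =>
    not_adj_of_mem_ownFibers_of_mem_clique hK hS hφ hi hhostK hu huK
      (hK huK hiK fun h => hi (h ▸ hu))
  have hxA : x ∉ A := notMem_ownFibers_of_adj_of_adj hφ hi hx hxi
  have hxB : x ∉ B := fun hxB => by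
    obtain ⟨j, -, hj⟩ := Finset.mem_image.mp (Finset.mem_sdiff.mp hxB).1
    exact ne_of_adj_of_adj hpart hK hIv hS hφ hi hiK hxIv hx hxi j hj
  have hsub : insert x (A ∪ B.filter (· ∉ K)) ⊆ Iv := by
    refine Finset.insert_subset hxIv (Finset.union_subset hAIv fun y hy => ?_)
    exact (hpart y).resolve_left (Finset.mem_filter.mp hy).2
  have hdisj : Disjoint A (B.filter (· ∉ K)) := Finset.disjoint_left.mpr fun a ha hb =>
    (Finset.mem_sdiff.mp (Finset.mem_filter.mp hb).1).2 ha
  have hcard := Finset.card_le_card hsub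
  rw [Finset.card_insert_of_notMem (by simp [hxA, hxB]),
    Finset.card_union_of_disjoint hdisj] at hcard
  omega

variable [Fintype W] [Nonempty W]

lemma length_le_of_isLegal_lex (hpart : ∀ v, v ∈ K ∨ v ∈ Iv) (hK : G.IsClique ↑K)
    (hIv : IsIndep G ↑Iv) (hmaxind : ∀ J : Finset V, IsIndep G ↑J → J.card ≤ Iv.card)
    (hS : IsLegal (Lex G H) S) : S.length ≤ Iv.card * gammaGr H + 1 := by
  obtain ⟨φ, hφ⟩ := exists_isFootprintMap hS
  have hlen := length_le_of_isFootprintMap hφ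
  have hγ := one_le_gammaGr H
  have hB₀ := card_filter_mem_clique_le_one hpart hK hIv hS hφ
  have hB₁ := card_ownFibers_add_card_filter_notMem_le hpart hK hIv hmaxind hS hφ
  have hsplit := Finset.card_filter_add_card_filter_not
    (s := Finset.univ.image φ \ ownFibers G H S) (· ∈ K)
  nlinarith

lemma length_le_of_isLegal_lex_of_forall_common_nbr (hpart : ∀ v, v ∈ K ∨ v ∈ Iv)
    (hK : G.IsClique ↑K) (hIv : IsIndep G ↑Iv)
    (hmaxind : ∀ J : Finset V, IsIndep G ↑J → J.card ≤ Iv.card)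
    (hcommon : ∀ v ∈ K, ∀ w ∈ K, ∃ x ∈ Iv, G.Adj v x ∧ G.Adj w x) (hS : IsLegal (Lex G H) S) :
    S.length ≤ Iv.card * gammaGr H := by
  obtain ⟨φ, hφ⟩ := exists_isFootprintMap hS
  have hlen := length_le_of_isFootprintMap hφ
  have hγ := one_le_gammaGr H
  have hAB := card_ownFibers_add_card_le_of_forall_common_nbr hpart hK hIv hmaxind hS hφ hcommon
  nlinarith

end SplitUpperBound

end GrundyDom

open GrundyDom Finset

/-- for a split graph `G = (I* ∪ K, E)` with `|I*| = α(G)` and any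
graph `H`, `γ_gr(G ∘ H) = |I*|·γ_gr(H) + n(G)`. -/
theorem stmt18 {V : Type*} [Fintype V] [DecidableEq V] (G : SimpleGraph V) [DecidableRel G.Adj] (K Iv : Finset V)
    (hpart : ∀ v, v ∈ K ∨ v ∈ Iv) (hdisj : Disjoint K Iv)
    (hK : G.IsClique ↑K) (hIv : IsIndep G ↑Iv)
    (hmaxind : ∀ J : Finset V, IsIndep G ↑J → J.card ≤ Iv.card)
    {W : Type*} [Fintype W] [Nonempty W] (H : SimpleGraph W) :
    gammaGr (Lex G H) = Iv.card * gammaGr H + (if ∃ v ∈ K, ∃ w ∈ K, ∀ x ∈ Iv, ¬(G.Adj v x ∧ G.Adj w x) then 1 else 0) := by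
  split_ifs with hcond
  · refine le_antisymm (gammaGr_le fun S => length_le_of_isLegal_lex hpart hK hIv hmaxind) ?_
    obtain ⟨v, hv, w, hw, hvw⟩ := hcond
    have hne : v ≠ w := by
      rintro rfl
      obtain ⟨x, hx, hvx⟩ := exists_adj_of_mem_clique hdisj hIv hmaxind hv
      exact hvw x hx ⟨hvx, hvx⟩
    exact card_mul_add_one_le_gammaGr_lex hIv (Finset.disjoint_left.mp hdisj hv)
      (Finset.disjoint_left.mp hdisj hw) (hK hv hw hne) fun x hx hvx hwx => hvw x hx ⟨hvx, hwx⟩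
  · push Not at hcond
    rw [add_zero]
    exact le_antisymm (gammaGr_le fun S =>
      length_le_of_isLegal_lex_of_forall_common_nbr hpart hK hIv hmaxind hcond)
      (card_mul_le_gammaGr_lex hIv)
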